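/- arXiv:0910.5613 — 2 statements merged into one kernel-verified Lean document; each statement's English description precedes it below -/
import Mathlib

section
/- For every θ > 0, N ≥ 1, ε₀ ∈ (0, 1/(1+θ)) and ε > 0 there exists T > 1 such that for every t ≥ T, every potential ξ : ℤ^d → [1,∞), and every z ∈ ℤ^d satisfying t ξ(z) ≥ |z|, |z| ≤ N r_t and −q(1−ε₀)|z|/r_t ≤ Φ_t(z)/a_t ≤ N, one has | Φ_{(1+θ)t}(z)/a_t − Φ_t(z)/a_t − (qθ/(1+θ)) |z|/r_t | < ε. -/
open MeasureTheory Filter Real Set ProbabilityTheory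

noncomputable section

/-- The `ℓ¹`-norm of a lattice point, as a real number. -/
def lnorm {d : ℕ} (z : Fin d → ℤ) : ℝ := ∑ i, |(z i : ℝ)|

/-- The number of nearest-neighbour lattice paths of length `‖z‖₁` from the origin to `z`. -/
def numPaths (d : ℕ) (z : Fin d → ℤ) : ℕ :=
  Set.ncard {p : Fin (∑ i, (z i).natAbs + 1) → (Fin d → ℤ) |
    p 0 = 0 ∧ p (Fin.last _) = z ∧
    ∀ i : Fin (∑ i, (z i).natAbs), (∑ j, ((p i.succ j) - (p i.castSucc j)).natAbs) = 1}

/-- `η(z)`: the logarithm of the number of paths of length `‖z‖₁` from `0` to `z`. -/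
def pathEntropy {d : ℕ} (z : Fin d → ℤ) : ℝ := Real.log (numPaths d z)

/-- The functional `Φ_t` associated with a potential `ξ`:
`Φ_t(z) = ξ(z) - (|z|/t) log ξ(z) + η(z)/t` if `t ξ(z) ≥ |z|`, and `0` otherwise. -/
def Phi {d : ℕ} (ξ : (Fin d → ℤ) → ℝ) (t : ℝ) (z : Fin d → ℤ) : ℝ :=
  if lnorm z ≤ t * ξ z then ξ z - lnorm z / t * Real.log (ξ z) + pathEntropy z / t else 0

/-- The spatial scaling function `r_t = (t / log t) ^ (α/(α-d))`. -/
def rScale (α : ℝ) (d : ℕ) (t : ℝ) : ℝ := (t / Real.log t) ^ (α / (α - d))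

/-- The scaling function `a_t = (t / log t) ^ (d/(α-d))`. -/
def aScale (α : ℝ) (d : ℕ) (t : ℝ) : ℝ := (t / Real.log t) ^ ((d : ℝ) / (α - d))

/-!
Write `L = log t`, `A = a_t`, `x = ξ(z)` and `c = |z|/t`. Both `Φ`'s are given by the explicit
formula, their difference is `θ/(1+θ) (c log x - η(z)/t)`, and `|z|/r_t = cL/A`, so the claim is
that `c log x - η(z)/t - q c L = o(A)` uniformly. The constraint `|z| ≤ N r_t` reads
`c ≤ N A / L`, and `η(z) ≤ d log 3 · |z|` makes the entropy term negligible. From above,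
`Φ_t(z) ≤ N A` gives `x ≤ N A (1 + log x / L)`, hence `log x ≤ qL + O(1)` because
`log A ≤ qL`. From below, `x ≥ c` and `log A = q (L - log L)` reduce the estimate to
`c log (A/c) ≤ 2 A √(N/L)`, which holds since `log y ≤ 2 √y`.
-/

open Topology

lemma lnorm_nonneg {d : ℕ} (z : Fin d → ℤ) : 0 ≤ lnorm z :=
  Finset.sum_nonneg fun _ _ => abs_nonneg _

lemma lnorm_eq_natAbs_sum {d : ℕ} (z : Fin d → ℤ) : lnorm z = ((∑ i, (z i).natAbs : ℕ) : ℝ) := by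
  simp [lnorm, Nat.cast_natAbs]

lemma numPaths_le (d : ℕ) (z : Fin d → ℤ) : numPaths d z ≤ 3 ^ (d * ∑ i, (z i).natAbs) := by
  set n := ∑ i, (z i).natAbs
  let steps (p : Fin (n + 1) → Fin d → ℤ) (i : Fin n) : Fin d → ℤ := p i.succ - p i.castSucc
  let box : Finset (Fin n → Fin d → ℤ) :=
    Fintype.piFinset fun _ => Fintype.piFinset fun _ => Finset.Icc (-1) 1
  refine (Set.ncard_le_ncard_of_injOn steps ?_ ?_ box.finite_toSet).trans ?_
  · rintro p ⟨-, -, hp⟩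
    simp only [Finset.mem_coe, box, Fintype.mem_piFinset, Finset.mem_Icc]
    intro i j
    have h := (Finset.single_le_sum (fun j _ => Nat.zero_le _) (Finset.mem_univ j)).trans (hp i).le
    simp only [steps, Pi.sub_apply]
    omega
  · rintro p ⟨hp0, -, -⟩ p' ⟨hp'0, -, -⟩ hsteps
    funext k
    induction k using Fin.induction with
    | zero => rw [hp0, hp'0]
    | succ i ih =>
      have h := congrFun hsteps i
      simp only [steps] at h
      rw [← sub_add_cancel (p i.succ) (p i.castSucc), h, ih, sub_add_cancel]
  · rw [Set.ncard_coe_finset]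
    simp [box, Fintype.card_piFinset, pow_mul]

lemma pathEntropy_nonneg {d : ℕ} (z : Fin d → ℤ) : 0 ≤ pathEntropy z :=
  log_natCast_nonneg _

lemma pathEntropy_le {d : ℕ} (z : Fin d → ℤ) : pathEntropy z ≤ d * log 3 * lnorm z := by
  rcases (numPaths d z).eq_zero_or_pos with h | h
  · rw [pathEntropy, h, Nat.cast_zero, log_zero]
    have := lnorm_nonneg z
    positivity
  · calc pathEntropy z ≤ log ((3 : ℕ) ^ (d * ∑ i, (z i).natAbs) : ℕ) :=
          log_le_log (by exact_mod_cast h) (by exact_mod_cast numPaths_le d z)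
      _ = d * log 3 * lnorm z := by
          rw [lnorm_eq_natAbs_sum, Nat.cast_pow, log_pow]
          push_cast
          ring

lemma sub_one_mul_log_le_mul_log {x B L : ℝ} (hx : 1 ≤ x) (hB : 0 < B) (hL : 0 < L)
    (h : x ≤ B * (1 + log x / L)) : (L - 1) * log x ≤ L * log B := by
  have hlog : 0 < 1 + log x / L := by have := log_nonneg hx; positivity
  have key : log x ≤ log B + log x / L :=
    calc log x ≤ log (B * (1 + log x / L)) := log_le_log (by linarith) h
      _ = log B + log (1 + log x / L) := log_mul hB.ne' hlog.ne'
      _ ≤ log B + log x / L := by linarith [log_le_sub_one_of_pos hlog]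
  have := mul_le_mul_of_nonneg_left key hL.le
  rw [mul_add, mul_div_cancel₀ _ hL.ne'] at this
  linarith

lemma log_le_two_mul_sqrt {y : ℝ} (hy : 0 ≤ y) : log y ≤ 2 * √y := by
  have := log_le_self (sqrt_nonneg y)
  rw [log_sqrt hy] at this
  linarith

lemma mul_log_div_le {c A u : ℝ} (hc : 0 ≤ c) (hA : 0 ≤ A) (hcA : c ≤ A * u) :
    c * log (A / c) ≤ 2 * A * √u := by
  rcases hc.eq_or_lt with rfl | hc
  · simp only [zero_mul]
    positivity
  have hsqrt : c * √(A / c) = √(A * c) := by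
    rw [show A * c = c ^ 2 * (A / c) by field_simp, sqrt_mul (sq_nonneg c), sqrt_sq hc.le]
  calc c * log (A / c) ≤ c * (2 * √(A / c)) :=
        mul_le_mul_of_nonneg_left (log_le_two_mul_sqrt (by positivity)) hc.le
    _ = 2 * √(A * c) := by rw [← hsqrt]; ring
    _ ≤ 2 * √(A ^ 2 * u) := by rw [sq, mul_assoc]; gcongr
    _ = 2 * A * √u := by rw [sqrt_mul (sq_nonneg A), sqrt_sq hA, mul_assoc]

lemma mul_log_sub_le {q N L A c x : ℝ} (hq : 0 ≤ q) (hN : 1 ≤ N) (hL : 1 < L) (hA : 0 < A)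
    (hlogA : log A ≤ q * L) (hx : 1 ≤ x) (hc : 0 ≤ c) (hcA : c ≤ N * A / L)
    (h : x - c * log x ≤ N * A) :
    c * (log x - q * L) ≤ N * A * (log N + q) / (L - 1) := by
  have hL0 : 0 < L := by linarith
  have hL1 : 0 < L - 1 := by linarith
  have hlogN : 0 ≤ log N := log_nonneg hN
  have hlogx : 0 ≤ log x := log_nonneg hx
  have hx' : x ≤ N * A * (1 + log x / L) := by
    have : c * log x ≤ N * A / L * log x := mul_le_mul_of_nonneg_right hcA hlogx
    linarith [show N * A / L * log x = N * A * (log x / L) by ring]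
  have hlog : (L - 1) * log x ≤ L * (log N + q * L) := by
    have := sub_one_mul_log_le_mul_log hx (by positivity) hL0 hx'
    rw [log_mul (by positivity) hA.ne'] at this
    linarith [mul_le_mul_of_nonneg_left hlogA hL0.le]
  have hM : log x - q * L ≤ L * (log N + q) / (L - 1) := by
    rw [le_div_iff₀ hL1]
    linarith
  calc c * (log x - q * L) ≤ c * (L * (log N + q) / (L - 1)) :=
        mul_le_mul_of_nonneg_left hM hc
    _ ≤ N * A / L * (L * (log N + q) / (L - 1)) :=
        mul_le_mul_of_nonneg_right hcA (by positivity)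
    _ = N * A * (log N + q) / (L - 1) := by field_simp

lemma mul_sub_log_le {q N L A c x : ℝ} (hq : 0 ≤ q) (hL : 1 ≤ L) (hA : 0 < A)
    (hlogA : log A = q * (L - log L)) (hx : 1 ≤ x) (hc : 0 ≤ c) (hcx : c ≤ x)
    (hcA : c ≤ N * A / L) :
    c * (q * L - log x) ≤ A * (N * q * log L / L + 2 * √(N / L)) := by
  have hlogc : log c ≤ log x := by
    rcases hc.eq_or_lt with rfl | hc
    · simpa using log_nonneg hx
    · exact log_le_log hc hcx
  have hsplit : c * (q * L - log c) = c * log (A / c) + c * (q * log L) := by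
    rcases eq_or_ne c 0 with rfl | hc0
    · simp
    · rw [log_div hA.ne' hc0, hlogA]
      ring
  calc c * (q * L - log x) ≤ c * (q * L - log c) := by gcongr
    _ = c * log (A / c) + c * (q * log L) := hsplit
    _ ≤ 2 * A * √(N / L) + N * A / L * (q * log L) := by
        have := log_nonneg hL
        exact add_le_add (mul_log_div_le hc hA.le (hcA.trans_eq (by ring)))
          (mul_le_mul_of_nonneg_right hcA (by positivity))
    _ = A * (N * q * log L / L + 2 * √(N / L)) := by ring

def expansionErr (N q κ L : ℝ) : ℝ :=
  N * (log N + q) / (L - 1) + N * (κ + q * log L) / L + 2 * √(N / L)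

lemma tendsto_expansionErr (N q κ : ℝ) : Tendsto (expansionErr N q κ) atTop (𝓝 0) := by
  have h₁ : Tendsto (fun L : ℝ => N * (log N + q) / (L - 1)) atTop (𝓝 0) :=
    tendsto_const_nhds.div_atTop (tendsto_atTop_add_const_right _ _ tendsto_id)
  have h₂ : Tendsto (fun L : ℝ => N * (κ + q * log L) / L) atTop (𝓝 0) := by
    have := (tendsto_const_nhds (x := N * κ)).div_atTop tendsto_id |>.add
      (isLittleO_log_id_atTop.tendsto_div_nhds_zero.const_mul (N * q))
    simp only [add_zero, mul_zero] at this
    refine this.congr fun L => ?_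
    simp only [id]
    ring
  have h₃ : Tendsto (fun L : ℝ => 2 * √(N / L)) atTop (𝓝 0) := by
    simpa using ((tendsto_const_nhds (x := N)).div_atTop tendsto_id).sqrt.const_mul 2
  have := (h₁.add h₂).add h₃
  rw [add_zero, add_zero] at this
  exact this

lemma abs_mul_log_sub_le {q N κ L A c x η : ℝ} (hq : 0 ≤ q) (hN : 1 ≤ N) (hκ : 0 ≤ κ)
    (hL : 1 < L) (hA : 0 < A) (hlogA : log A = q * (L - log L)) (hx : 1 ≤ x) (hc : 0 ≤ c)
    (hcx : c ≤ x) (hcA : c ≤ N * A / L) (hη : 0 ≤ η) (hηc : η ≤ κ * c)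
    (h : x - c * log x + η ≤ N * A) :
    |c * log x - η - q * c * L| ≤ A * expansionErr N q κ L := by
  have hlogL : 0 ≤ log L := log_nonneg hL.le
  have hupper := mul_log_sub_le hq hN hL hA
    (by rw [hlogA]; linarith [mul_nonneg hq hlogL]) hx hc hcA (by linarith)
  have hlower := mul_sub_log_le hq hL.le hA hlogA hx hc hcx hcA
  have hηA : η ≤ A * (N * κ / L) :=
    hηc.trans ((mul_le_mul_of_nonneg_left hcA hκ).trans_eq (by ring))
  have hterm₁ : 0 ≤ N * A * (log N + q) / (L - 1) := by
    have := log_nonneg hN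
    have : 0 < L - 1 := by linarith
    positivity
  have hterm₂ : 0 ≤ A * (N * κ / L + N * q * log L / L + 2 * √(N / L)) := by
    have : 0 < L := by linarith
    positivity
  have hsplit : A * expansionErr N q κ L = N * A * (log N + q) / (L - 1) +
      A * (N * κ / L + N * q * log L / L + 2 * √(N / L)) := by
    rw [expansionErr]
    ring
  rw [abs_le, hsplit]
  constructor <;> linarith

lemma rScale_eq_aScale_mul {α : ℝ} {d : ℕ} {t : ℝ} (hα : (d : ℝ) < α) (ht : 0 < t / log t) :
    rScale α d t = aScale α d t * (t / log t) := by
  have hq : α / (α - d) = d / (α - d) + 1 := by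
    field_simp [(sub_pos.2 hα).ne']
    ring
  rw [rScale, aScale, hq, rpow_add ht, rpow_one]

lemma log_aScale {α : ℝ} {d : ℕ} {t : ℝ} (ht : 0 < t) (hlogt : 0 < log t) :
    log (aScale α d t) = d / (α - d) * (log t - log (log t)) := by
  rw [aScale, log_rpow (div_pos ht hlogt), log_div ht.ne' hlogt.ne']

lemma Phi_of_le {d : ℕ} {ξ : (Fin d → ℤ) → ℝ} {t : ℝ} {z : Fin d → ℤ} (h : lnorm z ≤ t * ξ z) :
    Phi ξ t z = ξ z - lnorm z / t * log (ξ z) + pathEntropy z / t :=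
  if_pos h

lemma Phi_one_add_mul_sub_Phi {d : ℕ} {ξ : (Fin d → ℤ) → ℝ} {θ t : ℝ} {z : Fin d → ℤ}
    (hθ : 0 ≤ θ) (ht : 0 < t) (h : lnorm z ≤ t * ξ z) :
    Phi ξ ((1 + θ) * t) z - Phi ξ t z =
      θ / (1 + θ) * (lnorm z / t * log (ξ z) - pathEntropy z / t) := by
  have h' : lnorm z ≤ (1 + θ) * t * ξ z := by
    nlinarith [mul_nonneg hθ ((lnorm_nonneg z).trans h)]
  rw [Phi_of_le h, Phi_of_le h']
  field_simp
  ring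

theorem abs_Phi_expansion_le {d : ℕ} {α θ N t : ℝ} (hα : (d : ℝ) < α) (hθ : 0 ≤ θ) (hN : 1 ≤ N)
    (ht : 0 < t) (hlogt : 1 < log t) {ξ : (Fin d → ℤ) → ℝ} {z : Fin d → ℤ} (hξz : 1 ≤ ξ z)
    (hz : lnorm z ≤ t * ξ z) (hzN : lnorm z ≤ N * rScale α d t)
    (hΦ : Phi ξ t z / aScale α d t ≤ N) :
    |Phi ξ ((1 + θ) * t) z / aScale α d t - Phi ξ t z / aScale α d t
        - (d : ℝ) / (α - d) * θ / (1 + θ) * (lnorm z / rScale α d t)| ≤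
      expansionErr N (d / (α - d)) (d * log 3) (log t) := by
  set q : ℝ := d / (α - d)
  set L := log t
  set A := aScale α d t
  set c := lnorm z / t
  have hs : 0 < t / L := div_pos ht (by linarith)
  have hA : 0 < A := rpow_pos_of_pos hs _
  have hcA : c ≤ N * A / L := by
    rw [rScale_eq_aScale_mul hα hs] at hzN
    calc c ≤ N * (A * (t / L)) / t := div_le_div_of_nonneg_right hzN ht.le
      _ = N * A / L := by field_simp
  have hη : pathEntropy z / t ≤ d * log 3 * c := by
    rw [mul_div_assoc']
    exact div_le_div_of_nonneg_right (pathEntropy_le z) ht.le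
  have hΦ' : ξ z - c * log (ξ z) + pathEntropy z / t ≤ N * A := by
    rwa [div_le_iff₀ hA, Phi_of_le hz] at hΦ
  have key := abs_mul_log_sub_le (div_nonneg d.cast_nonneg (sub_pos.2 hα).le) hN
    (by positivity) hlogt hA (log_aScale ht (by linarith)) hξz
    (div_nonneg (lnorm_nonneg z) ht.le) (by rwa [div_le_iff₀ ht, mul_comm]) hcA
    (div_nonneg (pathEntropy_nonneg z) ht.le) hη hΦ'
  have hexpand : Phi ξ ((1 + θ) * t) z / A - Phi ξ t z / A
        - q * θ / (1 + θ) * (lnorm z / rScale α d t)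
      = θ / (1 + θ) * ((c * log (ξ z) - pathEntropy z / t - q * c * L) / A) := by
    rw [← sub_div, Phi_one_add_mul_sub_Phi hθ ht hz, rScale_eq_aScale_mul hα hs]
    simp only [A, c, L]
    field_simp
  have hfrac : |θ / (1 + θ)| ≤ 1 := by
    rw [abs_of_nonneg (by positivity), div_le_one (by positivity)]
    linarith
  calc _ = |θ / (1 + θ)| * (|c * log (ξ z) - pathEntropy z / t - q * c * L| / A) := by
        rw [hexpand, abs_mul, abs_div _ A, abs_of_pos hA]
    _ ≤ 1 * (A * expansionErr N q (d * log 3) L / A) := by gcongr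
    _ = _ := by field_simp

theorem Phi_scaled_time_expansion_general (d : ℕ) (α : ℝ) (hα : (d:ℝ) < α)
    (θ : ℝ) (hθ : 0 < θ) (N : ℝ) (hN : 1 ≤ N)
    (ε₀ : ℝ)
    (ε : ℝ) (hε : 0 < ε) :
    ∃ T : ℝ, 1 < T ∧ ∀ t : ℝ, T ≤ t → ∀ ξ : (Fin d → ℤ) → ℝ, (∀ z, 1 ≤ ξ z) →
      ∀ z : Fin d → ℤ, lnorm z ≤ t * ξ z → lnorm z ≤ N * rScale α d t →
        -(((d:ℝ)/(α - d)) * (1 - ε₀)) * (lnorm z / rScale α d t) ≤ Phi ξ t z / aScale α d t →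
        Phi ξ t z / aScale α d t ≤ N →
        |Phi ξ ((1 + θ) * t) z / aScale α d t - Phi ξ t z / aScale α d t
            - ((d:ℝ)/(α - d)) * θ / (1 + θ) * (lnorm z / rScale α d t)| < ε := by
  have hErr : Tendsto (fun t => expansionErr N (d / (α - d)) (d * log 3) (log t)) atTop (𝓝 0) :=
    (tendsto_expansionErr _ _ _).comp tendsto_log_atTop
  obtain ⟨T, hT⟩ := eventually_atTop.1 <|
    (hErr.eventually (gt_mem_nhds hε)).and (tendsto_log_atTop.eventually_gt_atTop 1)
  refine ⟨max T 2, one_lt_two.trans_le (le_max_right T 2), fun t ht ξ hξ z hz hzN _ hΦ => ?_⟩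
  obtain ⟨hErrt, hlogt⟩ := hT t (le_of_max_le_left ht)
  have ht0 : 0 < t := two_pos.trans_le (le_of_max_le_right ht)
  exact (abs_Phi_expansion_le hα hθ.le hN ht0 hlogt (hξ z) hz hzN hΦ).trans_lt hErrt

/-- For `z` in a large box with `Φ_t(z)/a_t` bounded, one has
`Φ_{(1+θ)t}(z)/a_t = Φ_t(z)/a_t + (qθ/(1+θ)) |z|/r_t + error`, where the error tends to `0`
uniformly as `t → ∞`; here `q = d/(α-d)`. -/
theorem Phi_scaled_time_expansion (d : ℕ) (hd : 1 ≤ d) (α : ℝ) (hα : (d:ℝ) < α)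
    (θ : ℝ) (hθ : 0 < θ) (N : ℝ) (hN : 1 ≤ N)
    (ε₀ : ℝ) (hε₀ : 0 < ε₀) (hε₀' : ε₀ < 1 / (1 + θ))
    (ε : ℝ) (hε : 0 < ε) :
    ∃ T : ℝ, 1 < T ∧ ∀ t : ℝ, T ≤ t → ∀ ξ : (Fin d → ℤ) → ℝ, (∀ z, 1 ≤ ξ z) →
      ∀ z : Fin d → ℤ, lnorm z ≤ t * ξ z → lnorm z ≤ N * rScale α d t →
        -(((d:ℝ)/(α - d)) * (1 - ε₀)) * (lnorm z / rScale α d t) ≤ Phi ξ t z / aScale α d t →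
        Phi ξ t z / aScale α d t ≤ N →
        |Phi ξ ((1 + θ) * t) z / aScale α d t - Phi ξ t z / aScale α d t
            - ((d:ℝ)/(α - d)) * θ / (1 + θ) * (lnorm z / rScale α d t)| < ε :=
  Phi_scaled_time_expansion_general d α hα θ hθ N hN ε₀ ε hε
end
end

section
/- lim_{θ→∞} θ^d I(θ) = 1/(d · B(α−d+1, d)). -/
open MeasureTheory Filter Real Set ProbabilityTheory

noncomputable section

/-- The Beta function `B(a,b)`. -/
def betaFn (a b : ℝ) : ℝ := ∫ v in (0:ℝ)..1, v ^ (a - 1) * (1 - v) ^ (b - 1)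

/-- The normalized incomplete Beta function `B̃(x,a,b)`. -/
def incBeta (x a b : ℝ) : ℝ := (∫ u in (0:ℝ)..x, u ^ (a - 1) * (1 - u) ^ (b - 1)) / betaFn a b

/-- The weight `φ_θ(v)` defined by
`1/φ_θ(v) = 1 - B̃(v,α-d,d) + (1+θ)^α (θ/v+1)^(d-α) B̃((v+θ)/(1+θ), α-d, d)`. -/
def phiWeight (α : ℝ) (d : ℕ) (θ v : ℝ) : ℝ :=
  (1 - incBeta v (α - d) d + (1 + θ) ^ α * (θ / v + 1) ^ ((d : ℝ) - α) *
      incBeta ((v + θ) / (1 + θ)) (α - d) d)⁻¹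

/-- The ageing constant `I(θ) = (1/B(α-d+1,d)) ∫₀¹ v^(α-d) (1-v)^(d-1) φ_θ(v) dv`. -/
def ageingI (α : ℝ) (d : ℕ) (θ : ℝ) : ℝ :=
  (betaFn (α - d + 1) d)⁻¹ *
    ∫ v in (0:ℝ)..1, v ^ (α - d) * (1 - v) ^ ((d : ℝ) - 1) * phiWeight α d θ v

/-- Auxiliary primitive of the Beta integrand. -/
def Fprim (a : ℝ) (d : ℕ) (x : ℝ) : ℝ :=
  ∫ u in (0:ℝ)..x, u ^ (a - 1) * (1 - u) ^ ((d : ℝ) - 1)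

lemma contW (d : ℕ) (hd : 1 ≤ d) : Continuous fun u : ℝ => (1 - u) ^ ((d : ℝ) - 1) := by
  have h1 : (0:ℝ) ≤ (d:ℝ) - 1 := by
    have : (1:ℝ) ≤ (d:ℝ) := by exact_mod_cast hd
    linarith
  exact (Real.continuous_rpow_const h1).comp (continuous_const.sub continuous_id)

lemma intf (d : ℕ) (hd : 1 ≤ d) {a : ℝ} (ha : 0 < a) (x y : ℝ) :
    IntervalIntegrable (fun u : ℝ => u ^ (a - 1) * (1 - u) ^ ((d : ℝ) - 1)) volume x y :=
  (intervalIntegral.intervalIntegrable_rpow' (by linarith)).mul_continuousOn (contW d hd).continuousOn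

lemma Fprim_cont (d : ℕ) (hd : 1 ≤ d) {a : ℝ} (ha : 0 < a) : Continuous (Fprim a d) :=
  intervalIntegral.continuous_primitive (intf d hd ha) 0

lemma Fprim_mono (d : ℕ) (hd : 1 ≤ d) {a : ℝ} (ha : 0 < a) {x y : ℝ}
    (h0 : 0 ≤ x) (hxy : x ≤ y) (hy : y ≤ 1) : Fprim a d x ≤ Fprim a d y := by
  have hadd := intervalIntegral.integral_add_adjacent_intervals
    (intf d hd ha 0 x) (intf d hd ha x y)
  have hnn : 0 ≤ ∫ u in x..y, u ^ (a - 1) * (1 - u) ^ ((d : ℝ) - 1) := by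
    apply intervalIntegral.integral_nonneg hxy
    intro u hu
    have hu0 : 0 ≤ u := le_trans h0 hu.1
    have hu1 : u ≤ 1 := le_trans hu.2 hy
    exact mul_nonneg (Real.rpow_nonneg hu0 _) (Real.rpow_nonneg (by linarith) _)
  have heq : Fprim a d y = Fprim a d x + ∫ u in x..y, u ^ (a - 1) * (1 - u) ^ ((d : ℝ) - 1) :=
    hadd.symm
  rw [Fprim] at heq ⊢
  rw [Fprim]
  linarith

lemma Fprim_pos (d : ℕ) (hd : 1 ≤ d) {a : ℝ} (ha : 0 < a) {x : ℝ}
    (hx : 0 < x) (hx1 : x ≤ 1) : 0 < Fprim a d x := by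
  apply intervalIntegral.intervalIntegral_pos_of_pos_on (intf d hd ha 0 x) _ hx
  intro u hu
  have hu1 : u < 1 := lt_of_lt_of_le hu.2 hx1
  exact mul_pos (Real.rpow_pos_of_pos hu.1 _) (Real.rpow_pos_of_pos (by linarith) _)

set_option maxHeartbeats 1000000 in
/-- **Tail of `I` at infinity:** `θ^d I(θ) → 1/(d B(α-d+1, d))` as `θ → ∞`. -/
theorem ageingI_tail_at_infinity (d : ℕ) (hd : 1 ≤ d) (α : ℝ) (hα : (d:ℝ) < α) :
    Tendsto (fun θ : ℝ => θ ^ d * ageingI α d θ) atTop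
      (nhds (1 / (d * betaFn (α - d + 1) d))) := by
  have hA : (0:ℝ) < α - d := sub_pos.2 hα
  have hd' : (0:ℝ) < d := by exact_mod_cast hd
  -- basic facts about the incomplete Beta function
  have hF1 : (0:ℝ) < Fprim (α - d) d 1 := Fprim_pos d hd hA one_pos le_rfl
  have hinc : ∀ x : ℝ, incBeta x (α - ↑d) ↑d = Fprim (α - ↑d) d x / Fprim (α - ↑d) d 1 :=
    fun _ => rfl
  have hinc_cont : Continuous fun x : ℝ => incBeta x (α - ↑d) ↑d := by
    simpa only [hinc] using (Fprim_cont d hd hA).div_const _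
  have hinc_one : incBeta 1 (α - ↑d) ↑d = 1 := by
    rw [hinc]; exact div_self hF1.ne'
  have hinc_mono : ∀ x y : ℝ, 0 ≤ x → x ≤ y → y ≤ 1 →
      incBeta x (α - ↑d) ↑d ≤ incBeta y (α - ↑d) ↑d := by
    intro x y h0 hxy hy
    rw [hinc, hinc, div_eq_mul_inv, div_eq_mul_inv]
    exact mul_le_mul_of_nonneg_right (Fprim_mono d hd hA h0 hxy hy) (inv_nonneg.2 hF1.le)
  have hinc_le_one : ∀ x : ℝ, 0 ≤ x → x ≤ 1 → incBeta x (α - ↑d) ↑d ≤ 1 := by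
    intro x h0 h1
    rw [← hinc_one]
    exact hinc_mono x 1 h0 h1 le_rfl
  have hc : 0 < incBeta (1/2) (α - ↑d) ↑d := by
    rw [hinc]
    exact div_pos (Fprim_pos d hd hA (by norm_num) (by norm_num)) hF1
  set c : ℝ := incBeta (1/2) (α - ↑d) ↑d with hcdef
  have hphi : ∀ θ v : ℝ, phiWeight α d θ v =
      (1 - incBeta v (α - ↑d) ↑d + (1 + θ) ^ α * (θ / v + 1) ^ ((d : ℝ) - α) *
        incBeta ((v + θ) / (1 + θ)) (α - ↑d) ↑d)⁻¹ := fun _ _ => rfl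
  -- key lower bound for the denominator
  have hDlow : ∀ θ : ℝ, 1 ≤ θ → ∀ v ∈ Set.Ioc (0:ℝ) 1,
      c * (θ ^ d * v ^ (α - (d:ℝ))) ≤
        1 - incBeta v (α - ↑d) ↑d + (1 + θ) ^ α * (θ / v + 1) ^ ((d : ℝ) - α) *
          incBeta ((v + θ) / (1 + θ)) (α - ↑d) ↑d := by
    intro θ hθ v hv
    obtain ⟨hv0, hv1⟩ := hv
    have hθ0 : (0:ℝ) < θ := by linarith
    have h1θ : (0:ℝ) < 1 + θ := by linarith
    have hJ : c ≤ incBeta ((v + θ) / (1 + θ)) (α - ↑d) ↑d := by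
      apply hinc_mono _ _ (by norm_num)
      · rw [le_div_iff₀ h1θ]; linarith
      · rw [div_le_one h1θ]; linarith
    have hX : ((1 + θ) / v) ^ ((d:ℝ) - α) ≤ (θ / v + 1) ^ ((d:ℝ) - α) := by
      apply Real.rpow_le_rpow_of_nonpos (by positivity) _ (by linarith)
      have e : θ / v + 1 = (θ + v) / v := by field_simp
      rw [e, div_le_div_iff₀ hv0 hv0]
      nlinarith
    have hsplit : ((1 + θ) / v) ^ ((d:ℝ) - α) = (1 + θ) ^ ((d:ℝ) - α) * v ^ (α - (d:ℝ)) := by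
      rw [Real.div_rpow h1θ.le hv0.le, div_eq_mul_inv, ← Real.rpow_neg hv0.le, neg_sub]
    have hkey : (1 + θ) ^ α * (1 + θ) ^ ((d:ℝ) - α) = (1 + θ) ^ d := by
      rw [← Real.rpow_natCast (1 + θ) d, ← Real.rpow_add h1θ]
      ring_nf
    have hnn : 0 ≤ 1 - incBeta v (α - ↑d) ↑d := by
      linarith [hinc_le_one v hv0.le hv1]
    have hstep : c * (θ ^ d * v ^ (α - (d:ℝ))) ≤
        (1 + θ) ^ α * (θ / v + 1) ^ ((d:ℝ) - α) * incBeta ((v + θ) / (1 + θ)) (α - ↑d) ↑d := by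
      calc c * (θ ^ d * v ^ (α - (d:ℝ)))
          ≤ c * ((1 + θ) ^ d * v ^ (α - (d:ℝ))) := by
            apply mul_le_mul_of_nonneg_left _ hc.le
            exact mul_le_mul_of_nonneg_right
              (pow_le_pow_left₀ hθ0.le (by linarith) d) (Real.rpow_nonneg hv0.le _)
        _ = (1 + θ) ^ α * ((1 + θ) / v) ^ ((d:ℝ) - α) * c := by
            rw [hsplit, ← hkey]; ring
        _ ≤ (1 + θ) ^ α * (θ / v + 1) ^ ((d:ℝ) - α) *
              incBeta ((v + θ) / (1 + θ)) (α - ↑d) ↑d := by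
            apply mul_le_mul (mul_le_mul_of_nonneg_left hX (by positivity)) hJ hc.le
              (by positivity)
    linarith
  -- the dominating function
  have hbound_int : IntervalIntegrable (fun v : ℝ => c⁻¹ * (1 - v) ^ ((d:ℝ) - 1)) volume 0 1 :=
    (continuous_const.mul (contW d hd)).intervalIntegrable 0 1
  -- pointwise limit
  have hlim : ∀ v ∈ Set.Ioc (0:ℝ) 1,
      Tendsto (fun θ : ℝ => θ ^ d *
          (v ^ (α - ↑d) * (1 - v) ^ ((d:ℝ) - 1) * phiWeight α d θ v)) atTop
        (nhds (v ^ (α - ↑d) * (1 - v) ^ ((d:ℝ) - 1) * (v ^ (α - ↑d))⁻¹)) := by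
    intro v hv
    obtain ⟨hv0, hv1⟩ := hv
    have hvA : (0:ℝ) < v ^ (α - (d:ℝ)) := Real.rpow_pos_of_pos hv0 _
    have hT1 : Tendsto (fun θ : ℝ => (θ ^ d)⁻¹) atTop (nhds 0) :=
      (tendsto_pow_atTop (by omega)).inv_tendsto_atTop
    have hinv : Tendsto (fun θ : ℝ => (1 + θ)⁻¹) atTop (nhds 0) :=
      (tendsto_atTop_add_const_left _ 1 tendsto_id).inv_tendsto_atTop
    have hratio : Tendsto (fun θ : ℝ => (v + θ) / (1 + θ)) atTop (nhds 1) := by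
      have h2 : Tendsto (fun θ : ℝ => 1 - (1 - v) * (1 + θ)⁻¹) atTop (nhds 1) := by
        have h := Tendsto.sub (tendsto_const_nhds (x := (1:ℝ))) (hinv.const_mul (1 - v))
        simpa using h
      apply h2.congr'
      filter_upwards [eventually_gt_atTop (0:ℝ)] with θ hθ
      have h1θ : (0:ℝ) < 1 + θ := by linarith
      field_simp
      ring
    have hJt : Tendsto (fun θ : ℝ => incBeta ((v + θ) / (1 + θ)) (α - ↑d) ↑d) atTop
        (nhds 1) := by
      have h := (hinc_cont.tendsto 1).comp hratio
      rwa [hinc_one] at h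
    have hT2a : Tendsto (fun θ : ℝ => (θ ^ d)⁻¹ * ((1 + θ) ^ α * (θ / v + 1) ^ ((d:ℝ) - α)))
        atTop (nhds (v ^ (α - (d:ℝ)))) := by
      have hb1 : Tendsto (fun θ : ℝ => (θ⁻¹ + 1) ^ α) atTop (nhds 1) := by
        have h0 : Tendsto (fun θ : ℝ => θ⁻¹ + 1) atTop (nhds (0 + 1)) :=
          tendsto_inv_atTop_zero.add tendsto_const_nhds
        have h1 := h0.rpow_const (p := α) (Or.inl (by norm_num))
        simpa using h1
      have hb2 : Tendsto (fun θ : ℝ => (1 / v + θ⁻¹) ^ ((d:ℝ) - α)) atTop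
          (nhds ((1 / v) ^ ((d:ℝ) - α))) := by
        have h0 : Tendsto (fun θ : ℝ => 1 / v + θ⁻¹) atTop (nhds (1 / v + 0)) :=
          tendsto_const_nhds.add tendsto_inv_atTop_zero
        have h1 := h0.rpow_const (p := (d:ℝ) - α) (Or.inl (by positivity))
        simpa using h1
      have hlim2 := hb1.mul hb2
      have heq : (1:ℝ) * (1 / v) ^ ((d:ℝ) - α) = v ^ (α - (d:ℝ)) := by
        rw [one_mul, one_div, Real.inv_rpow hv0.le, ← Real.rpow_neg hv0.le, neg_sub]
      rw [heq] at hlim2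
      apply hlim2.congr'
      filter_upwards [eventually_gt_atTop (0:ℝ)] with θ hθ
      have e1 : (1:ℝ) + θ = θ * (θ⁻¹ + 1) := by field_simp
      have e2 : θ / v + 1 = θ * (1 / v + θ⁻¹) := by field_simp
      rw [e1, e2, Real.mul_rpow hθ.le (by positivity), Real.mul_rpow hθ.le (by positivity)]
      have e3 : θ ^ α * θ ^ ((d:ℝ) - α) = θ ^ d := by
        rw [← Real.rpow_add hθ, show α + ((d:ℝ) - α) = ((d:ℝ)) by ring, Real.rpow_natCast]
      have e4 : (θ ^ d : ℝ)⁻¹ * (θ ^ α * (θ⁻¹ + 1) ^ α *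
            (θ ^ ((d:ℝ) - α) * (1 / v + θ⁻¹) ^ ((d:ℝ) - α))) =
          (θ ^ α * θ ^ ((d:ℝ) - α)) * (θ ^ d : ℝ)⁻¹ *
            ((θ⁻¹ + 1) ^ α * (1 / v + θ⁻¹) ^ ((d:ℝ) - α)) := by ring
      rw [e4, e3, mul_inv_cancel₀ (by positivity), one_mul]
    -- convergence of the rescaled denominator
    have hEt : Tendsto (fun θ : ℝ => (θ ^ d)⁻¹ *
        (1 - incBeta v (α - ↑d) ↑d + (1 + θ) ^ α * (θ / v + 1) ^ ((d:ℝ) - α) *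
          incBeta ((v + θ) / (1 + θ)) (α - ↑d) ↑d)) atTop (nhds (v ^ (α - (d:ℝ)))) := by
      have h := (hT1.mul_const (1 - incBeta v (α - ↑d) ↑d)).add (hT2a.mul hJt)
      simp only [zero_mul, zero_add, mul_one] at h
      apply h.congr
      intro θ
      ring
    have hphit : Tendsto (fun θ : ℝ => θ ^ d * phiWeight α d θ v) atTop
        (nhds ((v ^ (α - (d:ℝ)))⁻¹)) := by
      have h := hEt.inv₀ hvA.ne'
      apply h.congr'
      filter_upwards [eventually_gt_atTop (0:ℝ)] with θ hθ
      rw [hphi, mul_inv, inv_inv]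
    have h := hphit.const_mul (v ^ (α - ↑d) * (1 - v) ^ ((d:ℝ) - 1))
    apply h.congr
    intro θ
    ring
  -- the bound
  have hbound : ∀ᶠ θ : ℝ in atTop, ∀ v ∈ Set.Ioc (0:ℝ) 1,
      ‖θ ^ d * (v ^ (α - ↑d) * (1 - v) ^ ((d:ℝ) - 1) * phiWeight α d θ v)‖ ≤
        c⁻¹ * (1 - v) ^ ((d:ℝ) - 1) := by
    filter_upwards [eventually_ge_atTop (1:ℝ)] with θ hθ
    intro v hv
    obtain ⟨hv0, hv1⟩ := hv
    have hθ0 : (0:ℝ) < θ := by linarith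
    have hvA : (0:ℝ) < v ^ (α - (d:ℝ)) := Real.rpow_pos_of_pos hv0 _
    have hW : (0:ℝ) ≤ (1 - v) ^ ((d:ℝ) - 1) := Real.rpow_nonneg (by linarith) _
    set E : ℝ := 1 - incBeta v (α - ↑d) ↑d + (1 + θ) ^ α * (θ / v + 1) ^ ((d:ℝ) - α) *
        incBeta ((v + θ) / (1 + θ)) (α - ↑d) ↑d with hEdef
    have hlow := hDlow θ hθ v ⟨hv0, hv1⟩
    have hE : (0:ℝ) < E := lt_of_lt_of_le
      (mul_pos hc (mul_pos (pow_pos hθ0 d) hvA)) hlow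
    have h1 : θ ^ d * v ^ (α - (d:ℝ)) ≤ c⁻¹ * E := by
      have h := mul_le_mul_of_nonneg_left hlow (inv_nonneg.2 hc.le)
      rwa [← mul_assoc, inv_mul_cancel₀ hc.ne', one_mul] at h
    have h2 : θ ^ d * v ^ (α - (d:ℝ)) * E⁻¹ ≤ c⁻¹ := by
      calc θ ^ d * v ^ (α - (d:ℝ)) * E⁻¹ ≤ c⁻¹ * E * E⁻¹ :=
            mul_le_mul_of_nonneg_right h1 (inv_nonneg.2 hE.le)
        _ = c⁻¹ := by field_simp
    have hphiE : phiWeight α d θ v = E⁻¹ := by rw [hphi, hEdef]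
    have hGnn : 0 ≤ θ ^ d * (v ^ (α - ↑d) * (1 - v) ^ ((d:ℝ) - 1) * phiWeight α d θ v) := by
      rw [hphiE]
      positivity
    rw [Real.norm_eq_abs, abs_of_nonneg hGnn, hphiE]
    calc θ ^ d * (v ^ (α - ↑d) * (1 - v) ^ ((d:ℝ) - 1) * E⁻¹)
        = (1 - v) ^ ((d:ℝ) - 1) * (θ ^ d * v ^ (α - (d:ℝ)) * E⁻¹) := by ring
      _ ≤ (1 - v) ^ ((d:ℝ) - 1) * c⁻¹ := mul_le_mul_of_nonneg_left h2 hW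
      _ = c⁻¹ * (1 - v) ^ ((d:ℝ) - 1) := mul_comm _ _
  -- measurability
  have hmeas : ∀ θ : ℝ, AEStronglyMeasurable
      (fun v : ℝ => θ ^ d * (v ^ (α - ↑d) * (1 - v) ^ ((d:ℝ) - 1) * phiWeight α d θ v))
      (volume.restrict (Set.uIoc (0:ℝ) 1)) := by
    intro θ
    have hrA : Measurable fun y : ℝ => y ^ (α - (d:ℝ)) := by measurability
    have hrB : Measurable fun y : ℝ => y ^ ((d:ℝ) - α) := by measurability
    have hm1 : Measurable fun v : ℝ => v ^ (α - ↑d) := hrA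
    have hm2 : Measurable fun v : ℝ => (1 - v) ^ ((d:ℝ) - 1) := (contW d hd).measurable
    have hm3 : Measurable fun v : ℝ => (θ / v + 1) ^ ((d:ℝ) - α) :=
      hrB.comp ((measurable_const.div measurable_id).add measurable_const)
    have hm4 : Measurable fun v : ℝ => incBeta v (α - ↑d) ↑d := hinc_cont.measurable
    have hm5 : Measurable fun v : ℝ => incBeta ((v + θ) / (1 + θ)) (α - ↑d) ↑d :=
      (hinc_cont.comp ((continuous_id.add continuous_const).div_const _)).measurable
    have hm6 : Measurable fun v : ℝ => phiWeight α d θ v := by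
      simp only [hphi]
      exact ((measurable_const.sub hm4).add
        ((measurable_const.mul hm3).mul hm5)).inv
    exact (measurable_const.mul ((hm1.mul hm2).mul hm6)).aestronglyMeasurable
  -- dominated convergence
  have hDCT : Tendsto (fun θ : ℝ => ∫ v in (0:ℝ)..1,
        θ ^ d * (v ^ (α - ↑d) * (1 - v) ^ ((d:ℝ) - 1) * phiWeight α d θ v)) atTop
      (nhds (∫ v in (0:ℝ)..1,
        v ^ (α - ↑d) * (1 - v) ^ ((d:ℝ) - 1) * (v ^ (α - ↑d))⁻¹)) := by
    apply intervalIntegral.tendsto_integral_filter_of_dominated_convergence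
      (fun v : ℝ => c⁻¹ * (1 - v) ^ ((d:ℝ) - 1))
      (Eventually.of_forall hmeas) _ hbound_int _
    · filter_upwards [hbound] with θ hθ
      apply Eventually.of_forall
      intro v hv
      rw [Set.uIoc_of_le (zero_le_one)] at hv
      exact hθ v hv
    · apply Eventually.of_forall
      intro v hv
      rw [Set.uIoc_of_le (zero_le_one)] at hv
      exact hlim v hv
  -- identify the limit integral
  have hIlim : (∫ v in (0:ℝ)..1,
      v ^ (α - ↑d) * (1 - v) ^ ((d:ℝ) - 1) * (v ^ (α - ↑d))⁻¹) = 1 / d := by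
    have h1 : (∫ v in (0:ℝ)..1,
        v ^ (α - ↑d) * (1 - v) ^ ((d:ℝ) - 1) * (v ^ (α - ↑d))⁻¹) =
        ∫ v in (0:ℝ)..1, (1 - v) ^ ((d:ℝ) - 1) := by
      apply intervalIntegral.integral_congr_ae
      apply Eventually.of_forall
      intro v hv
      rw [Set.uIoc_of_le (zero_le_one)] at hv
      have hvA : (0:ℝ) < v ^ (α - (d:ℝ)) := Real.rpow_pos_of_pos hv.1 _
      field_simp
    rw [h1]
    have h2 := intervalIntegral.integral_comp_sub_left (a := (0:ℝ)) (b := 1)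
      (fun u : ℝ => u ^ ((d:ℝ) - 1)) 1
    simp only [sub_self, sub_zero] at h2
    rw [h2, integral_rpow (Or.inl (by linarith : (-1:ℝ) < (d:ℝ) - 1))]
    have hne : (d:ℝ) - 1 + 1 = (d:ℝ) := by ring
    rw [hne, Real.one_rpow, Real.zero_rpow hd'.ne']
    ring
  -- assemble
  have hmain := hDCT.const_mul (betaFn (α - ↑d + 1) ↑d)⁻¹
  rw [hIlim] at hmain
  have hfun : ∀ θ : ℝ, (betaFn (α - ↑d + 1) ↑d)⁻¹ * ∫ v in (0:ℝ)..1,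
      θ ^ d * (v ^ (α - ↑d) * (1 - v) ^ ((d:ℝ) - 1) * phiWeight α d θ v) =
      θ ^ d * ageingI α d θ := by
    intro θ
    rw [ageingI, intervalIntegral.integral_const_mul]
    ring
  have hval : (betaFn (α - ↑d + 1) ↑d)⁻¹ * (1 / d) = 1 / (d * betaFn (α - ↑d + 1) ↑d) := by
    rw [one_div, one_div, mul_inv]
    ring
  rw [hval] at hmain
  exact hmain.congr hfun
end
end
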